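/- arXiv:1403.4750 — 5 statements merged into one kernel-verified Lean document; each statement's English description precedes it below -/
import Mathlib

section
/- Let m be a positive integer and m₁, m₂ integers with 0 ≤ m₁, m₂ ≤ m. Then in ℤ[x,x⁻¹], the difference χ_{m₂}·χ_{m-m₂} − χ_{m₁}·χ_{m-m₁} is a nonnegative integer combination of the characters χₖ (k ≥ 0) if and only if min(m₁, m−m₁) ≤ min(m₂, m−m₂). -/
open LaurentPolynomial Finset

/-- `chi k` is the character of the irreducible `sl₂(ℂ)`-module of highest weight `k`
(the `(k+1)`-dimensional module `Symᵏ ℂ²`), as an element of `ℤ[x,x⁻¹]`: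
`chi k = x^k + x^(k-2) + ⋯ + x^(-k)`. -/
noncomputable def chi (k : ℕ) : LaurentPolynomial ℤ :=
  ∑ j ∈ Finset.range (k + 1), T ((k : ℤ) - 2 * j)

lemma chi_mul (a b : ℕ) :
    chi a * chi b = ∑ u ∈ range (min a b + 1), chi (a + b - 2*u) := by
  unfold chi
  rw [Finset.sum_mul_sum]
  simp_rw [← T_add]
  rw [← Finset.sum_product', Finset.sum_sigma']
  apply Finset.sum_nbij'
    (i := fun p => if p.1 + p.2 ≤ b then ⟨p.1, p.2⟩ else ⟨b - p.2, p.1 + 2*p.2 - b⟩)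
    (j := fun q => if q.1 + q.2 ≤ b then (q.1, q.2) else (2*q.1 + q.2 - b, b - q.1))
  · rintro ⟨i, j⟩ hp
    dsimp only
    simp only [Finset.mem_product, Finset.mem_range] at hp
    split <;>
      simp only [Finset.mem_sigma, Finset.mem_range, Nat.lt_succ_iff, le_min_iff] <;> omega
  · rintro ⟨u, l⟩ hq
    dsimp only
    simp only [Finset.mem_sigma, Finset.mem_range, Nat.lt_succ_iff, le_min_iff] at hq
    split <;> simp only [Finset.mem_product, Finset.mem_range] <;> omega
  · rintro ⟨i, j⟩ hp
    dsimp only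
    simp only [Finset.mem_product, Finset.mem_range] at hp
    by_cases h : i + j ≤ b
    · rw [if_pos h]; dsimp only; rw [if_pos h]
    · rw [if_neg h]; dsimp only; rw [if_neg (by omega)]
      have e1 : 2*(b - j) + (i + 2*j - b) - b = i := by omega
      have e2 : b - (b - j) = j := by omega
      rw [e1, e2]
  · rintro ⟨u, l⟩ hq
    dsimp only
    simp only [Finset.mem_sigma, Finset.mem_range, Nat.lt_succ_iff, le_min_iff] at hq
    by_cases h : u + l ≤ b
    · rw [if_pos h]; dsimp only; rw [if_pos h]
    · rw [if_neg h]; dsimp only; rw [if_neg (by omega)]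
      have e1 : b - (b - u) = u := by omega
      have e2 : 2*u + l - b + 2*(b - u) - b = l := by omega
      rw [e1, e2]
  · rintro ⟨i, j⟩ hp
    simp only [Finset.mem_product, Finset.mem_range] at hp
    by_cases h : i + j ≤ b
    · rw [if_pos h]; dsimp only; congr 1; omega
    · rw [if_neg h]; dsimp only; congr 1; omega

lemma chi_apply (k : ℕ) (e : ℤ) :
    (chi k).coeff e = ∑ j ∈ Finset.range (k+1), if ((k:ℤ) - 2*j) = e then 1 else 0 := by
  unfold chi
  rw [AddMonoidAlgebra.coeff_sum, Finsupp.finset_sum_apply]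
  simp [T_apply]

lemma chi_apply_nonneg (k : ℕ) (e : ℤ) : 0 ≤ (chi k).coeff e := by
  rw [chi_apply]
  apply Finset.sum_nonneg
  intro j _
  split <;> norm_num

lemma chi_apply_one {k : ℕ} {e : ℤ} (j₀ : ℕ) (hj : j₀ ≤ k) (he : (k:ℤ) - 2*j₀ = e) :
    (chi k).coeff e = 1 := by
  rw [chi_apply]
  rw [Finset.sum_congr rfl (fun j _ => by
    rw [if_congr (show ((k:ℤ) - 2*j = e) ↔ j = j₀ by omega) rfl rfl])]
  rw [Finset.sum_ite_eq' (Finset.range (k+1)) j₀ (fun _ => (1:ℤ))]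
  simp [Nat.lt_succ_iff, hj]

lemma chi_apply_zero {k : ℕ} {e : ℤ} (h : (k:ℤ) < e) : (chi k).coeff e = 0 := by
  rw [chi_apply]
  apply Finset.sum_eq_zero
  intro j hj
  rw [if_neg (by omega)]

/-- Schur positivity for sl₂: for `0 ≤ m₁, m₂ ≤ m`, the difference
`χ_{m₂}·χ_{m-m₂} − χ_{m₁}·χ_{m-m₁}` is a nonnegative integer combination of the
characters `χₖ` if and only if `min(m₁, m−m₁) ≤ min(m₂, m−m₂)`. -/
theorem sl2_schur_positive_iff (m m₁ m₂ : ℕ) (hm : 0 < m) (h₁ : m₁ ≤ m) (h₂ : m₂ ≤ m) :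
    (∃ (N : ℕ) (c : ℕ → ℕ),
        chi m₂ * chi (m - m₂) - chi m₁ * chi (m - m₁)
          = ∑ k ∈ Finset.range N, (c k : ℤ) • chi k)
      ↔ min m₁ (m - m₁) ≤ min m₂ (m - m₂) := by
  set n₁ := min m₁ (m - m₁) with hn₁
  set n₂ := min m₂ (m - m₂) with hn₂
  have hn₁m : 2 * n₁ ≤ m := by omega
  have hn₂m : 2 * n₂ ≤ m := by omega
  have hA : chi m₂ * chi (m - m₂) = ∑ u ∈ range (n₂ + 1), chi (m - 2*u) := by
    rw [chi_mul]
    apply Finset.sum_congr (by rw [hn₂]) (fun u _ => by congr 1; omega)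
  have hB : chi m₁ * chi (m - m₁) = ∑ u ∈ range (n₁ + 1), chi (m - 2*u) := by
    rw [chi_mul]
    apply Finset.sum_congr (by rw [hn₁]) (fun u _ => by congr 1; omega)
  constructor
  · -- hard direction: nonneg combo → n₁ ≤ n₂
    rintro ⟨N, c, hc⟩
    by_contra hlt
    push_neg at hlt
    set e : ℤ := (m : ℤ) - 2*(n₂ + 1) with he
    have h := congrArg (fun f : LaurentPolynomial ℤ => f.coeff e) hc
    rw [AddMonoidAlgebra.coeff_sub, Finsupp.sub_apply, AddMonoidAlgebra.coeff_sum, Finsupp.finset_sum_apply] at h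
    rw [hA, hB, AddMonoidAlgebra.coeff_sum, AddMonoidAlgebra.coeff_sum, Finsupp.finset_sum_apply, Finsupp.finset_sum_apply] at h
    have hAe : ∑ u ∈ range (n₂ + 1), (chi (m - 2*u)).coeff e = (n₂ : ℤ) + 1 := by
      rw [Finset.sum_congr rfl (fun u hu => by
        simp only [Finset.mem_range, Nat.lt_succ_iff] at hu
        exact chi_apply_one (n₂ + 1 - u) (by omega) (by omega))]
      simp
    have hBe : ∑ u ∈ range (n₁ + 1), (chi (m - 2*u)).coeff e = (n₂ : ℤ) + 2 := by
      have hfil : (range (n₁ + 1)).filter (fun u => u < n₂ + 2) = range (n₂ + 2) := by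
        ext u; simp only [Finset.mem_filter, Finset.mem_range]; omega
      calc ∑ u ∈ range (n₁ + 1), (chi (m - 2*u)).coeff e
          = ∑ u ∈ range (n₁ + 1), (if u < n₂ + 2 then (1:ℤ) else 0) := by
            apply Finset.sum_congr rfl
            intro u hu
            simp only [Finset.mem_range, Nat.lt_succ_iff] at hu
            by_cases hcase : u < n₂ + 2
            · rw [if_pos hcase]
              exact chi_apply_one (n₂ + 1 - u) (by omega) (by omega)
            · rw [if_neg hcase]
              exact chi_apply_zero (by omega)
        _ = (n₂ : ℤ) + 2 := by
            rw [Finset.sum_ite, Finset.sum_const_zero, add_zero, Finset.sum_const, hfil,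
              Finset.card_range]
            push_cast; ring
    rw [hAe, hBe] at h
    have hpos : 0 ≤ ∑ k ∈ range N, ((c k : ℤ) • chi k).coeff e := by
      apply Finset.sum_nonneg
      intro k _
      rw [AddMonoidAlgebra.coeff_smul, Finsupp.smul_apply, smul_eq_mul]
      exact mul_nonneg (by positivity) (chi_apply_nonneg k e)
    omega
  · -- easy direction: n₁ ≤ n₂ → explicit nonneg combo
    intro h
    refine ⟨m + 1, fun k =>
      if k ∈ (Finset.Ico (n₁+1) (n₂+1)).image (fun u => m - 2*u) then 1 else 0, ?_⟩
    rw [hA, hB]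
    rw [Finset.range_eq_Ico,
      ← Finset.sum_Ico_consecutive _ (Nat.zero_le (n₁ + 1)) (by omega : n₁ + 1 ≤ n₂ + 1),
      ← Finset.range_eq_Ico, add_sub_cancel_left]
    have himg : ((Finset.Ico (n₁+1) (n₂+1)).image (fun u => m - 2*u)) ⊆ range (m + 1) := by
      intro k hk
      simp only [Finset.mem_image, Finset.mem_Ico] at hk
      obtain ⟨u, _, rfl⟩ := hk
      simp only [Finset.mem_range]
      omega
    symm
    calc ∑ k ∈ range (m+1),
          ((if k ∈ (Finset.Ico (n₁+1) (n₂+1)).image (fun u => m - 2*u) then (1:ℕ) else 0 : ℕ) : ℤ)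
            • chi k
        = ∑ k ∈ range (m+1),
            (if k ∈ (Finset.Ico (n₁+1) (n₂+1)).image (fun u => m - 2*u) then chi k else 0) := by
          apply Finset.sum_congr rfl
          intro k _
          split <;> simp
      _ = ∑ k ∈ range (m+1) ∩ (Finset.Ico (n₁+1) (n₂+1)).image (fun u => m - 2*u), chi k :=
          Finset.sum_ite_mem _ _ _
      _ = ∑ k ∈ (Finset.Ico (n₁+1) (n₂+1)).image (fun u => m - 2*u), chi k := by
          rw [Finset.inter_eq_right.mpr himg]
      _ = ∑ u ∈ Finset.Ico (n₁+1) (n₂+1), chi (m - 2*u) :=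
          Finset.sum_image (fun u hu v hv huv => by
            simp only [Finset.mem_coe, Finset.mem_Ico] at hu hv; omega)
end

section
/- Let m = ℓk + p with 0 ≤ p < k. Then the partition of m with p parts equal to ℓ+1 and k−p parts equal to ℓ is the unique maximal element among partitions of m with exactly k positive parts, under the reverse dominance order. -/
/-- A partition of `m`: a weakly decreasing list of positive integers summing to `m`. -/
structure PartitionL (m : ℕ) where
  parts : List ℕ
  sorted : parts.Pairwise (· ≥ ·)
  pos : ∀ p ∈ parts, 0 < p
  sum_eq : parts.sum = m

/-- The reverse dominance relation on partitions of `m`: `λ ⪯ μ` iff for all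
`j = 1, …, min(k₁, k₂)` the `j`-th partial sum of `λ` is at least that of `μ`. -/
def rdom {m : ℕ} (lam mu : PartitionL m) : Prop :=
  ∀ j ≤ min lam.parts.length mu.parts.length,
    (mu.parts.take j).sum ≤ (lam.parts.take j).sum

/-- Lower bound for partial sums of a sorted list (first `j` parts ≥ `j` copies of `L[j]`). -/
lemma take_sum_ge (L : List ℕ) (hs : L.Pairwise (· ≥ ·)) (j : ℕ) (hj : j < L.length) :
    j * L[j] ≤ (L.take j).sum := by
  have h := List.card_nsmul_le_sum (L.take j) L[j] ?_
  · simpa [List.length_take, Nat.min_eq_left hj.le, smul_eq_mul] using h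
  · intro x hx
    have hmem : L[j] ∈ L.drop j := by
      have : (L.drop j)[0]'(by simp; omega) = L[j] := by simp
      exact this ▸ List.getElem_mem _
    exact hs.rel_of_mem_take_of_mem_drop hx hmem

/-- Upper bound for tail sums of a sorted list. -/
lemma drop_sum_le (L : List ℕ) (hs : L.Pairwise (· ≥ ·)) (j : ℕ) (hj : j < L.length) :
    (L.drop j).sum ≤ (L.length - j) * L[j] := by
  have h := List.sum_le_card_nsmul (L.drop j) L[j] ?_
  · simpa [List.length_drop, smul_eq_mul] using h
  · intro x hx
    rcases List.getElem_of_mem hx with ⟨i, hi, rfl⟩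
    rw [List.getElem_drop]
    have hji : i < L.length - j := by simpa using hi
    rcases Nat.eq_zero_or_pos i with rfl | hi0
    · simp
    · have hmem : L[j] ∈ L.take (j + 1) := by
        have : (L.take (j+1))[j]'(by simp; omega) = L[j] := by
          simp [List.getElem_take]
        exact this ▸ List.getElem_mem _
      have hdm : L[j + i] ∈ L.drop (j + 1) := by
        have hlt : i - 1 < (L.drop (j+1)).length := by simp [List.length_drop] at hi ⊢; omega
        have : (L.drop (j+1))[i-1] = L[j + i]'(by omega) := by
          rw [List.getElem_drop]; congr 1; omega
        exact this ▸ List.getElem_mem _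
      exact hs.rel_of_mem_take_of_mem_drop hmem hdm

/-- Key inequality: any partition of `m = l*k + p` with `k` parts has `j`-th
partial sum at least `j*l + min j p`. -/
lemma key_ineq (m k l p : ℕ) (hm : m = l * k + p) (hp : p < k)
    (mu : PartitionL m) (hlen : mu.parts.length = k) (j : ℕ) (hj : j ≤ k) :
    j * l + min j p ≤ (mu.parts.take j).sum := by
  rcases eq_or_lt_of_le hj with rfl | hjk
  · have : mu.parts.take j = mu.parts := List.take_of_length_le (by omega)
    rw [this, mu.sum_eq]
    have : min j p = p := by omega
    rw [this]; nlinarith [hm]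
  · have hjlen : j < mu.parts.length := by omega
    set a := mu.parts[j] with ha
    rcases le_or_gt (l + 1) a with hla | hla
    · have h1 : j * a ≤ (mu.parts.take j).sum := take_sum_ge _ mu.sorted j hjlen
      have h2 : j * (l + 1) ≤ j * a := Nat.mul_le_mul_left _ hla
      have h3 : min j p ≤ j := Nat.min_le_left _ _
      nlinarith
    · -- a ≤ l
      have hdrop : (mu.parts.drop j).sum ≤ (k - j) * a := by
        have := drop_sum_le _ mu.sorted j hjlen
        rwa [hlen] at this
      have hsplit : (mu.parts.take j).sum + (mu.parts.drop j).sum = m := by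
        rw [← List.sum_append, List.take_append_drop, mu.sum_eq]
      have h2 : (k - j) * a ≤ (k - j) * l := Nat.mul_le_mul_left _ (by omega)
      have h3 : j * l + (k - j) * l = k * l := by
        rw [← Nat.add_mul]; congr 1; omega
      have h4 : min j p ≤ p := Nat.min_le_right _ _
      have h5 : m = k * l + p := by rw [hm]; ring
      omega

lemma take_sum_eq_of_forall {A B : List ℕ} (hAB : A.length = B.length)
    (h : ∀ j ≤ A.length, (A.take j).sum = (B.take j).sum) : A = B := by
  apply List.ext_getElem hAB
  intro i h1 h2
  have e1 := h i (by omega)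
  have e2 := h (i + 1) (by omega)
  rw [List.sum_take_succ _ i h1, List.sum_take_succ _ i h2] at e2
  omega

/-- Let `m = ℓ·k + p` with `0 ≤ p < k`. The partition of `m` with `p` parts equal to
`ℓ+1` and `k−p` parts equal to `ℓ` is the unique maximal element among partitions of
`m` with exactly `k` positive parts, in the reverse dominance order. -/
theorem rdom_greatest_fixed_length (m k l p : ℕ) (hk : 0 < k) (hkm : k ≤ m)
    (hm : m = l * k + p) (hp : p < k) (top : PartitionL m)
    (htop : top.parts = List.replicate p (l + 1) ++ List.replicate (k - p) l) :
    (∀ mu : PartitionL m, mu.parts.length = k → rdom mu top) ∧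
    (∀ nu : PartitionL m, nu.parts.length = k →
      (∀ mu : PartitionL m, mu.parts.length = k → rdom mu nu) → nu = top) := by
  have htoplen : top.parts.length = k := by
    rw [htop]; simp; omega
  have htopsum : ∀ j ≤ k, (top.parts.take j).sum = j * l + min j p := by
    intro j hj
    rw [htop, List.take_append, List.take_replicate, List.take_replicate,
      List.sum_append, List.sum_replicate, List.sum_replicate, List.length_replicate,
      smul_eq_mul, smul_eq_mul]
    have hmin : min j p + min (j - p) (k - p) = j := by omega
    have : min j p * (l + 1) + min (j - p) (k - p) * l
        = min j p + (min j p + min (j - p) (k - p)) * l := by ring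
    rw [this, hmin]; omega
  have part1 : ∀ mu : PartitionL m, mu.parts.length = k → rdom mu top := by
    intro mu hlen j hjle
    rw [hlen, htoplen, min_self] at hjle
    rw [htopsum j hjle]
    exact key_ineq m k l p hm hp mu hlen j hjle
  refine ⟨part1, ?_⟩
  intro nu hnulen hmax
  have h1 := hmax top htoplen
  have h2 := part1 nu hnulen
  have heq : ∀ j ≤ k, (nu.parts.take j).sum = (top.parts.take j).sum := by
    intro j hj
    have a1 := h1 j (by rw [hnulen, htoplen, min_self]; omega)
    have a2 := h2 j (by rw [hnulen, htoplen, min_self]; omega)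
    omega
  have hparts : nu.parts = top.parts := by
    apply take_sum_eq_of_forall (by rw [hnulen, htoplen])
    intro j hj
    exact heq j (by omega)
  obtain ⟨np, ns, npos, nsum⟩ := nu
  obtain ⟨tp, ts, tpos, tsum⟩ := top
  simp only at hparts
  subst hparts
  rfl
end

section
/- Suppose λ = (m₁ ≥ ... ≥ m_k ≥ 0) and μ = (n₁ ≥ ... ≥ n_k ≥ 0) are partitions of m (zero parts allowed, not both ending in 0) such that μ covers λ in the reverse dominance order. Then there exist indices i < j with n_i = m_i − 1, n_j = m_j + 1, and n_ℓ = m_ℓ for all ℓ ∉ {i, j}. -/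
open Finset

/-- `f` is a partition of `m` padded with zeros to length `k`: a weakly decreasing
sequence of nonnegative integers `f 0 ≥ f 1 ≥ ⋯ ≥ f (k-1) ≥ 0` summing to `m`. -/
def IsPaddedPartition (m k : ℕ) (f : ℕ → ℕ) : Prop :=
  (∀ a b, a ≤ b → b < k → f b ≤ f a) ∧ ∑ i ∈ Finset.range k, f i = m

/-- Reverse dominance on zero-padded partitions of common length `k`:
`λ ⪯ μ` iff `Σ_{ℓ≤j} μ_ℓ ≤ Σ_{ℓ≤j} λ_ℓ` for all `j ≤ k`. -/
def rdPad (k : ℕ) (lam mu : ℕ → ℕ) : Prop :=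
  ∀ j ≤ k, ∑ i ∈ Finset.range j, mu i ≤ ∑ i ∈ Finset.range j, lam i

/-- Strict reverse dominance: `λ ≺ μ`. -/
def rdPadLt (k : ℕ) (lam mu : ℕ → ℕ) : Prop :=
  rdPad k lam mu ∧ ∃ i < k, lam i ≠ mu i

/-- Monotonicity from adjacent comparisons. -/
lemma mono_of_adj (k : ℕ) (f : ℕ → ℕ) (h : ∀ t, t + 1 < k → f (t + 1) ≤ f t) :
    ∀ a b, a ≤ b → b < k → f b ≤ f a := by
  intro a b hab hbk
  induction b with
  | zero => interval_cases a; exact le_rfl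
  | succ n ih =>
    rcases Nat.lt_or_ge a (n + 1) with h1 | h2
    · exact le_trans (h n hbk) (ih (by omega) (by omega))
    · have : a = n + 1 := by omega
      simp [this]

/-- If `μ` covers `λ` in the reverse dominance order on partitions of `m` padded with
zeros to length `k` (not both ending in `0`), then `μ` is obtained from `λ` by
decreasing some part `i` by `1` and increasing some later part `j > i` by `1`. -/
theorem cover_relation (m k : ℕ) (hk : 0 < k) (lam mu : ℕ → ℕ)
    (hlam : IsPaddedPartition m k lam) (hmu : IsPaddedPartition m k mu)
    (hlast : lam (k - 1) ≠ 0 ∨ mu (k - 1) ≠ 0)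
    (hlt : rdPadLt k lam mu)
    (hcov : ¬ ∃ nu : ℕ → ℕ, IsPaddedPartition m k nu ∧
      rdPadLt k lam nu ∧ rdPadLt k nu mu) :
    ∃ i j, i < j ∧ j < k ∧ lam i = mu i + 1 ∧ mu j = lam j + 1 ∧
      ∀ l < k, l ≠ i → l ≠ j → mu l = lam l := by
  classical
  obtain ⟨hrd, hexP⟩ := hlt
  -- i : the first index where lam and mu differ
  set i := Nat.find hexP with hi_def
  obtain ⟨hik, hine⟩ := Nat.find_spec hexP
  rw [← hi_def] at hik hine
  have hmin : ∀ t, t < i → lam t = mu t := by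
    intro t ht
    have := Nat.find_min hexP ht
    push_neg at this
    exact this (lt_trans ht hik)
  -- prefix sums agree up to i
  have hpre : ∀ t, t ≤ i → ∑ l ∈ Finset.range t, mu l = ∑ l ∈ Finset.range t, lam l := by
    intro t ht
    exact (Finset.sum_congr rfl (fun l hl => (hmin l (by
      simp only [Finset.mem_range] at hl; omega)).symm))
  -- lam i > mu i
  have hilt : mu i + 1 ≤ lam i := by
    have h1 := hrd (i + 1) (by omega)
    rw [Finset.sum_range_succ, Finset.sum_range_succ, hpre i le_rfl] at h1
    omega
  -- j + 1 : first index > i where prefix sums agree again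
  have hQ : ∃ n, i < n ∧ n ≤ k ∧
      ∑ l ∈ Finset.range n, mu l = ∑ l ∈ Finset.range n, lam l :=
    ⟨k, hik, le_rfl, hmu.2.trans hlam.2.symm⟩
  set jj := Nat.find hQ with hjj_def
  obtain ⟨hijj, hjjk, hjjsum⟩ := Nat.find_spec hQ
  rw [← hjj_def] at hijj hjjk hjjsum
  have hstrict : ∀ t, i < t → t < jj →
      ∑ l ∈ Finset.range t, mu l < ∑ l ∈ Finset.range t, lam l := by
    intro t ht1 ht2
    have h1 := Nat.find_min hQ ht2
    push_neg at h1
    have hle := hrd t (by omega)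
    have := h1 ht1 (by omega)
    omega
  -- jj ≥ i + 2
  have hjj2 : i + 2 ≤ jj := by
    by_contra h
    have : jj = i + 1 := by omega
    rw [this, Finset.sum_range_succ, Finset.sum_range_succ, hpre i le_rfl] at hjjsum
    omega
  set j := jj - 1 with hj_def
  have hjjeq : jj = j + 1 := by omega
  have hij : i < j := by omega
  have hjk : j < k := by omega
  -- mu j > lam j
  have hsumA : ∑ l ∈ Finset.range (j + 1), mu l = ∑ l ∈ Finset.range (j + 1), lam l := by
    rw [← hjjeq]; exact hjjsum
  have hsumB : ∑ l ∈ Finset.range j, mu l < ∑ l ∈ Finset.range j, lam l :=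
    hstrict j hij (by omega)
  have hjlt : lam j + 1 ≤ mu j := by
    rw [Finset.sum_range_succ, Finset.sum_range_succ] at hsumA
    omega
  -- mu (j+1) ≤ lam (j+1) when j+1 < k
  have hnext : j + 1 < k → mu (j + 1) ≤ lam (j + 1) := by
    intro h
    have h1 := hrd (j + 2) (by omega)
    rw [Finset.sum_range_succ, Finset.sum_range_succ (f := fun l => lam l) (n := j + 1),
      hsumA] at h1
    omega
  -- the candidate intermediate partition
  set nu : ℕ → ℕ := fun t => if t = i then mu i + 1 else if t = j then mu j - 1 else mu t
    with hnu_def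
  have hnu_i : nu i = mu i + 1 := by simp [hnu_def]
  have hnu_j : nu j = mu j - 1 := by
    simp only [hnu_def]
    rw [if_neg (by omega : ¬ j = i)]
    simp
  have hnu_other : ∀ l, l ≠ i → l ≠ j → nu l = mu l := by
    intro l h1 h2; simp [hnu_def, h1, h2]
  -- prefix sums of nu
  have hnu_pre1 : ∀ t, t ≤ i → ∑ l ∈ Finset.range t, nu l = ∑ l ∈ Finset.range t, mu l := by
    intro t ht
    exact Finset.sum_congr rfl (fun l hl => by
      simp only [Finset.mem_range] at hl
      exact hnu_other l (by omega) (by omega))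
  have hnu_pre2 : ∀ t, i < t → t ≤ j →
      ∑ l ∈ Finset.range t, nu l = (∑ l ∈ Finset.range t, mu l) + 1 := by
    intro t ht1 ht2
    have hi_mem : i ∈ Finset.range t := Finset.mem_range.mpr ht1
    rw [← Finset.add_sum_erase _ nu hi_mem, ← Finset.add_sum_erase _ mu hi_mem, hnu_i]
    have : ∑ l ∈ (Finset.range t).erase i, nu l = ∑ l ∈ (Finset.range t).erase i, mu l := by
      refine Finset.sum_congr rfl (fun l hl => ?_)
      rw [Finset.mem_erase, Finset.mem_range] at hl
      exact hnu_other l hl.1 (by omega)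
    omega
  have hnu_pre3 : ∀ t, j < t → t ≤ k →
      ∑ l ∈ Finset.range t, nu l = ∑ l ∈ Finset.range t, mu l := by
    intro t ht1 ht2
    have hi_mem : i ∈ Finset.range t := Finset.mem_range.mpr (by omega)
    have hj_mem : j ∈ (Finset.range t).erase i := by
      rw [Finset.mem_erase, Finset.mem_range]; exact ⟨by omega, ht1⟩
    rw [← Finset.add_sum_erase _ nu hi_mem, ← Finset.add_sum_erase _ mu hi_mem,
      ← Finset.add_sum_erase _ nu hj_mem, ← Finset.add_sum_erase _ mu hj_mem,
      hnu_i, hnu_j]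
    have : ∑ l ∈ ((Finset.range t).erase i).erase j, nu l
        = ∑ l ∈ ((Finset.range t).erase i).erase j, mu l := by
      refine Finset.sum_congr rfl (fun l hl => ?_)
      rw [Finset.mem_erase, Finset.mem_erase] at hl
      exact hnu_other l hl.2.1 hl.1
    omega
  -- nu is a padded partition
  have hnu_adj : ∀ t, t + 1 < k → nu (t + 1) ≤ nu t := by
    intro t ht
    by_cases h1 : t + 1 = i
    · -- nu t = mu t = lam t ≥ lam i ≥ mu i + 1
      have hti : t < i := by omega
      have := hmin t hti
      have hmono := hlam.1 t i (by omega) (by omega)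
      rw [h1, hnu_i, hnu_other t (by omega) (by omega)]
      omega
    · by_cases h2 : t = i
      · rw [h2, hnu_i]
        by_cases h3 : i + 1 = j
        · rw [h3, hnu_j]
          have := hmu.1 i j (by omega) hjk
          omega
        · rw [hnu_other (i + 1) (by omega) h3]
          have := hmu.1 i (i + 1) (by omega) (by omega)
          omega
      · by_cases h4 : t + 1 = j
        · rw [h4, hnu_j, hnu_other t h2 (by omega)]
          have := hmu.1 t j (by omega) hjk
          omega
        · by_cases h5 : t = j
          · rw [h5, hnu_j, hnu_other (j + 1) (by omega) (by omega)]
            have h6 := hnext (by omega)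
            have h7 := hlam.1 j (j + 1) (by omega) (by omega)
            omega
          · rw [hnu_other (t + 1) h1 h4, hnu_other t h2 h5]
            exact hmu.1 t (t + 1) (by omega) ht
  have hnu_part : IsPaddedPartition m k nu := by
    constructor
    · exact mono_of_adj k nu hnu_adj
    · rw [hnu_pre3 k hjk le_rfl]; exact hmu.2
  have hrd_lam_nu : rdPad k lam nu := by
    intro t htk
    by_cases h1 : t ≤ i
    · rw [hnu_pre1 t h1]; exact hrd t htk
    · by_cases h2 : t ≤ j
      · rw [hnu_pre2 t (by omega) h2]
        have := hstrict t (by omega) (by omega)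
        omega
      · rw [hnu_pre3 t (by omega) htk]; exact hrd t htk
  have hrd_nu_mu : rdPad k nu mu := by
    intro t htk
    by_cases h1 : t ≤ i
    · rw [hnu_pre1 t h1]
    · by_cases h2 : t ≤ j
      · rw [hnu_pre2 t (by omega) h2]; omega
      · rw [hnu_pre3 t (by omega) htk]
  -- final dichotomy
  by_cases hdone : lam i = mu i + 1 ∧ mu j = lam j + 1 ∧
      ∀ l, l < k → l ≠ i → l ≠ j → mu l = lam l
  · exact ⟨i, j, hij, hjk, hdone.1, hdone.2.1, fun l hl h1 h2 => hdone.2.2 l hl h1 h2⟩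
  · exfalso
    apply hcov
    refine ⟨nu, hnu_part, ⟨hrd_lam_nu, ?_⟩, ⟨hrd_nu_mu, ⟨i, hik, by rw [hnu_i]; omega⟩⟩⟩
    -- a witness where lam ≠ nu
    push_neg at hdone
    by_cases hA : lam i = mu i + 1
    · by_cases hB : mu j = lam j + 1
      · obtain ⟨l, hl, hli, hlj, hlne⟩ := hdone hA hB
        exact ⟨l, hl, by rw [hnu_other l hli hlj]; omega⟩
      · exact ⟨j, hjk, by rw [hnu_j]; omega⟩
    · exact ⟨i, hik, by rw [hnu_i]; omega⟩
end

section
/- Let m₁ ≥ m₂ > 0 and n₁ ≥ n₂ > 0 with m₁ + m₂ = n₁ + n₂ and m₁ ≥ n₁ (i.e., (m₁,m₂) ⪯ (n₁,n₂) in reverse dominance). Then in n variables, the product of complete homogeneous symmetric polynomials h_{n₁}·h_{n₂} − h_{m₁}·h_{m₂} is a nonnegative integer combination of Schur polynomials. -/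
open MvPolynomial Finset

/-- The complete homogeneous symmetric polynomial of degree `k` in `n` variables,
with integer coefficients (the single-row Schur polynomial `s_{(k)}`, i.e. the
character of `Symᵏ ℂⁿ`). -/
noncomputable def h (n k : ℕ) : MvPolynomial (Fin n) ℤ := hsymm (Fin n) ℤ k

/-- The two-row Schur polynomial `s_{(a,b)}` in `n` variables (`a ≥ b ≥ 0`), defined
via the Jacobi–Trudi determinant: `s_{(a,b)} = h_a·h_b − h_{a+1}·h_{b−1}`
(and `s_{(a,0)} = h_a`). -/
noncomputable def schur2 (n a b : ℕ) : MvPolynomial (Fin n) ℤ :=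
  if b = 0 then h n a else h n a * h n b - h n (a + 1) * h n (b - 1)

/-- The `sl_n` two-factor case of the main theorem: if `(m₁,m₂) ⪯ (n₁,n₂)` in the
reverse dominance order (`m₁ ≥ m₂ > 0`, `n₁ ≥ n₂ > 0`, `m₁+m₂ = n₁+n₂`, `m₁ ≥ n₁`),
then `h_{n₁}·h_{n₂} − h_{m₁}·h_{m₂}` is a nonnegative integer combination of Schur
polynomials. -/
theorem schur_positive_two_factor (n m₁ m₂ n₁ n₂ : ℕ)
    (hm : m₂ ≤ m₁) (hmpos : 0 < m₂) (hn : n₂ ≤ n₁) (hnpos : 0 < n₂)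
    (hsum : m₁ + m₂ = n₁ + n₂) (hdom : n₁ ≤ m₁) :
    ∃ (S : Finset (ℕ × ℕ)) (c : ℕ × ℕ → ℕ),
      (∀ p ∈ S, p.2 ≤ p.1) ∧
      h n n₁ * h n n₂ - h n m₁ * h n m₂ = ∑ p ∈ S, (c p : ℤ) • schur2 n p.1 p.2 := by
  set N := m₁ + m₂ with hN
  refine ⟨(Finset.range (n₂ - m₂)).image (fun i => (N - (m₂ + i + 1), m₂ + i + 1)),
    fun _ => 1, ?_, ?_⟩
  · intro p hp
    simp only [Finset.mem_image, Finset.mem_range] at hp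
    obtain ⟨i, hi, rfl⟩ := hp
    simp only
    omega
  · rw [Finset.sum_image (by
      intro a _ b _ hab
      have := congrArg Prod.snd hab
      simpa using this)]
    simp only [Nat.cast_one, one_smul]
    have key : ∀ i ∈ Finset.range (n₂ - m₂),
        schur2 n (N - (m₂ + i + 1)) (m₂ + i + 1)
          = h n (N - (m₂ + (i + 1))) * h n (m₂ + (i + 1))
            - h n (N - (m₂ + i)) * h n (m₂ + i) := by
      intro i hi
      simp only [Finset.mem_range] at hi
      rw [schur2, if_neg (by omega)]
      have h1 : N - (m₂ + i + 1) + 1 = N - (m₂ + i) := by omega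
      have h2 : m₂ + i + 1 - 1 = m₂ + i := by omega
      have h3 : m₂ + (i + 1) = m₂ + i + 1 := by omega
      rw [h1, h2, h3]
    rw [Finset.sum_congr rfl key,
      Finset.sum_range_sub (fun i => h n (N - (m₂ + i)) * h n (m₂ + i))]
    have e1 : m₂ + (n₂ - m₂) = n₂ := by omega
    have e2 : N - n₂ = n₁ := by omega
    have e3 : m₂ + 0 = m₂ := rfl
    have e4 : N - m₂ = m₁ := by omega
    rw [e1, e2, e3, e4]
end

section
/- Let V(k) = Symᵏ ℂ² be the irreducible sl₂(ℂ)-modules. For partitions λ = (m₁ ≥ ... ≥ m_{k₁} > 0) ⪯ μ = (n₁ ≥ ... ≥ n_{k₂} > 0) of m in reverse dominance order, for every irreducible V(τ): dim Hom_{sl₂}(V(m₁)⊗...⊗V(m_{k₁}), V(τ)) ≤ dim Hom_{sl₂}(V(n₁)⊗...⊗V(n_{k₂}), V(τ)). Equivalently, on characters, χ_{n₁}···χ_{n_{k₂}} − χ_{m₁}···χ_{m_{k₁}} is a nonnegative integer combination of the χ_τ. -/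
open LaurentPolynomial Finset

lemma chi_zero : chi 0 = 1 := by simp [chi]

lemma chi_succ (k : ℕ) : chi (k+1) = T 1 * chi k + T (-(k+1) : ℤ) := by
  rw [chi, Finset.sum_range_succ, chi, Finset.mul_sum]
  congr 1
  · apply Finset.sum_congr rfl
    intro j _
    rw [← T_add]
    congr 1
    push_cast
    ring
  · congr 1
    push_cast
    ring

lemma delta_chi (k : ℕ) : (T 1 - T (-1)) * chi k = T (k+1) - T (-(k+1) : ℤ) := by
  induction k with
  | zero => simp [chi_zero]
  | succ k ih =>
    have h : (T 1 - T (-1)) * chi (k+1)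
        = T 1 * ((T 1 - T (-1)) * chi k) + (T 1 - T (-1)) * T (-(k+1) : ℤ) := by
      rw [chi_succ]; ring
    rw [h, ih]; simp only [mul_sub, sub_mul, ← T_add]
    push_cast
    ring_nf

lemma delta_ne : (T 1 - T (-1) : LaurentPolynomial ℤ) ≠ 0 := by
  intro h
  have : ((T 1 - T (-1) : LaurentPolynomial ℤ)).coeff 1 = 0 := by rw [h]; rfl
  rw [AddMonoidAlgebra.coeff_sub, Finsupp.sub_apply] at this
  simp only [T_apply] at this
  norm_num at this

lemma cg_step (a b : ℕ) (hab : b ≤ a) (hb : 1 ≤ b) :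
    chi a * chi b = chi (a+1) * chi (b-1) + chi (a-b) := by
  set d : LaurentPolynomial ℤ := T 1 - T (-1) with hd
  apply mul_left_cancel₀ delta_ne
  apply mul_left_cancel₀ delta_ne
  have e1 : d * (d * (chi a * chi b)) = (d * chi a) * (d * chi b) := by ring
  have e2 : d * (d * (chi (a+1) * chi (b-1) + chi (a-b)))
      = (d * chi (a+1)) * (d * chi (b-1)) + d * (d * chi (a-b)) := by ring
  rw [e1, e2, delta_chi, delta_chi, delta_chi, delta_chi, delta_chi, hd]
  obtain ⟨b', rfl⟩ := Nat.exists_eq_add_of_le hb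
  obtain ⟨t, rfl⟩ := Nat.exists_eq_add_of_le hab
  simp only [mul_sub, sub_mul, ← T_add]
  push_cast
  ring_nf
  simp [Nat.add_sub_cancel_left]
  ring_nf

/-- Nonnegative integer combinations of the characters `chi`. -/
def IsChiCombo (f : LaurentPolynomial ℤ) : Prop :=
  ∃ c : ℕ →₀ ℕ, f = c.sum fun τ n => (n : ℤ) • chi τ

lemma combo_zero : IsChiCombo 0 := ⟨0, by simp⟩

lemma combo_chi (k : ℕ) : IsChiCombo (chi k) := by
  refine ⟨Finsupp.single k 1, ?_⟩
  rw [Finsupp.sum_single_index] <;> simp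

lemma combo_add {f g} (hf : IsChiCombo f) (hg : IsChiCombo g) : IsChiCombo (f + g) := by
  obtain ⟨c, rfl⟩ := hf; obtain ⟨d, rfl⟩ := hg
  exact ⟨c + d, (Finsupp.sum_add_index' (by simp) (by intro a b₁ b₂; push_cast; rw [add_smul])).symm⟩

lemma combo_sum {ι : Type*} (s : Finset ι) (g : ι → LaurentPolynomial ℤ)
    (h : ∀ i ∈ s, IsChiCombo (g i)) : IsChiCombo (∑ i ∈ s, g i) := by
  classical
  induction s using Finset.induction_on with
  | empty => simpa using combo_zero
  | insert _ _ hx ih =>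
    rw [Finset.sum_insert hx]
    exact combo_add (h _ (Finset.mem_insert_self _ _))
      (ih fun i hi => h i (Finset.mem_insert_of_mem hi))

lemma combo_nsmul (n : ℕ) {f} (hf : IsChiCombo f) : IsChiCombo ((n : ℤ) • f) := by
  induction n with
  | zero => simpa using combo_zero
  | succ n ih =>
    have : ((n+1 : ℕ) : ℤ) • f = (n : ℤ) • f + f := by push_cast; rw [add_smul, one_smul]
    rw [this]; exact combo_add ih hf

lemma chi_mul_chi (a b : ℕ) : IsChiCombo (chi a * chi b) := by
  have key : ∀ b a : ℕ, b ≤ a → IsChiCombo (chi a * chi b) := by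
    intro b
    induction b with
    | zero => intro a _; rw [chi_zero, mul_one]; exact combo_chi a
    | succ b ih =>
      intro a hba
      rw [cg_step a (b+1) hba (Nat.succ_le_succ (Nat.zero_le b))]
      exact combo_add (by simpa using ih (a+1) (by omega)) (combo_chi _)
  rcases le_total b a with h | h
  · exact key b a h
  · rw [mul_comm]; exact key a b h

lemma combo_mul {f g} (hf : IsChiCombo f) (hg : IsChiCombo g) : IsChiCombo (f * g) := by
  obtain ⟨c, rfl⟩ := hf; obtain ⟨d, rfl⟩ := hg
  rw [Finsupp.sum, Finset.sum_mul]
  refine combo_sum _ _ fun τ _ => ?_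
  rw [smul_mul_assoc]
  refine combo_nsmul _ ?_
  rw [Finsupp.sum, Finset.mul_sum]
  refine combo_sum _ _ fun σ _ => ?_
  rw [mul_smul_comm]
  exact combo_nsmul _ (chi_mul_chi τ σ)

lemma combo_listprod (L : List ℕ) : IsChiCombo ((L.map chi).prod) := by
  induction L with
  | nil => rw [List.map_nil, List.prod_nil, ← chi_zero]; exact combo_chi 0
  | cons a L ih => rw [List.map_cons, List.prod_cons]; exact combo_mul (combo_chi a) ih

lemma sum_take_le (L : List ℕ) (j : ℕ) : (L.take j).sum ≤ L.sum := by
  conv_rhs => rw [← List.take_append_drop j L]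
  rw [List.sum_append]
  exact Nat.le_add_right _ _

lemma sum_take_mono (L : List ℕ) {j₁ j₂ : ℕ} (h : j₁ ≤ j₂) :
    (L.take j₁).sum ≤ (L.take j₂).sum := by
  have : (L.take j₂).take j₁ = L.take j₁ := by
    rw [List.take_take, min_eq_left h]
  rw [← this]
  exact sum_take_le _ _

lemma sum_take_succ_getD (L : List ℕ) (j : ℕ) :
    (L.take (j+1)).sum = (L.take j).sum + L.getD j 0 := by
  rcases lt_or_ge j L.length with h | h
  · rw [List.sum_take_succ L j h, List.getD_eq_getElem L 0 h]
  · rw [List.take_of_length_le h, List.take_of_length_le (by omega), List.getD_eq_default L 0 h]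
    omega

lemma getD_anti {L : List ℕ} (hL : L.Pairwise (· ≥ ·)) (j : ℕ) :
    L.getD (j+1) 0 ≤ L.getD j 0 := by
  rcases lt_or_ge (j+1) L.length with h | h
  · rw [List.getD_eq_getElem L 0 h, List.getD_eq_getElem L 0 (by omega)]
    exact List.pairwise_iff_getElem.mp hL j (j+1) (by omega) h (by omega)
  · rw [List.getD_eq_default L 0 h]
    exact Nat.zero_le _

lemma sum_take_concave {L : List ℕ} (hL : L.Pairwise (· ≥ ·)) (j : ℕ) :
    (L.take (j+2)).sum + (L.take j).sum ≤ 2 * (L.take (j+1)).sum := by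
  rw [sum_take_succ_getD L (j+1), sum_take_succ_getD L j]
  have := getD_anti hL j
  omega

lemma headD_le_sum (L : List ℕ) : L.headD 0 ≤ L.sum := by
  cases L with
  | nil => simp
  | cons a L => simp [List.sum_cons]

lemma sum_take_cons_append (b : ℕ) (A : List ℕ) (e : ℕ) (B : List ℕ) {j : ℕ}
    (hj : 1 ≤ j) :
    ((b :: (A ++ e :: B)).take j).sum =
      if j ≤ A.length + 1 then b + (A.take (j-1)).sum
      else b + A.sum + e + (B.take (j - A.length - 2)).sum := by
  obtain ⟨i, rfl⟩ : ∃ i, j = i + 1 := ⟨j - 1, by omega⟩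
  rw [List.take_succ_cons, List.sum_cons, List.take_append]
  rcases le_or_gt (i+1) (A.length + 1) with h | h
  · rw [if_pos h]
    have h0 : i - A.length = 0 := by omega
    rw [h0]
    simp
  · rw [if_neg (by omega), List.take_of_length_le (by omega), List.sum_append]
    obtain ⟨r, hr⟩ : ∃ r, i - A.length = r + 1 := ⟨i - A.length - 1, by omega⟩
    rw [hr, List.take_succ_cons, List.sum_cons]
    have : r = i + 1 - A.length - 2 := by omega
    rw [this]
    ring

lemma key_nil (L : List ℕ) (hLp : ∀ p ∈ L, 0 < p) (hsum : L.sum = 0) :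
    IsChiCombo ((([] : List ℕ).map chi).prod - (L.map chi).prod) := by
  have hL : L = [] := by
    cases L with
    | nil => rfl
    | cons a L' =>
      exfalso
      have := hLp a (by simp)
      simp [List.sum_cons] at hsum
      omega
  subst hL
  simpa using combo_zero

lemma key : ∀ (n : ℕ) (L M : List ℕ), L.Pairwise (· ≥ ·) → M.Pairwise (· ≥ ·) →
    (∀ p ∈ L, 0 < p) → (∀ p ∈ M, 0 < p) → L.sum = M.sum →
    (∀ j, (M.take j).sum ≤ (L.take j).sum) →
    M.length * (M.sum + 1) + (L.headD 0 - M.headD 0) ≤ n →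
    IsChiCombo ((M.map chi).prod - (L.map chi).prod) := by
  intro n
  induction n with
  | zero =>
    intro L M hLs hMs hLp hMp hsum hdom hm
    cases M with
    | nil => exact key_nil L hLp (by simpa using hsum)
    | cons b M' =>
      exfalso
      have h1 : 0 < (b :: M').length * ((b :: M').sum + 1) :=
        Nat.mul_pos (by simp) (by omega)
      omega
  | succ n ih =>
    intro L M hLs hMs hLp hMp hsum hdom hm
    cases M with
    | nil => exact key_nil L hLp (by simpa using hsum)
    | cons b M' =>
    cases L with
    | nil =>
      exfalso
      have hb := hMp b (by simp)
      simp [List.sum_cons] at hsum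
      omega
    | cons a L' =>
    have hb := hMp b List.mem_cons_self
    have ha := hLp a List.mem_cons_self
    have hab : b ≤ a := by
      have := hdom 1
      simpa using this
    rcases eq_or_lt_of_le hab with heq | hlt
    · -- equal heads case
      subst heq
      have hdom' : ∀ j, (M'.take j).sum ≤ (L'.take j).sum := by
        intro j
        have := hdom (j+1)
        simp only [List.take_succ_cons, List.sum_cons] at this
        omega
      have hsum' : L'.sum = M'.sum := by
        simp only [List.sum_cons] at hsum
        omega
      have hmeas : M'.length * (M'.sum + 1) + (L'.headD 0 - M'.headD 0) ≤ n := by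
        simp only [List.length_cons, List.sum_cons, List.headD_cons] at hm
        have k1 : M'.length * (M'.sum + 1) ≤ M'.length * (b + M'.sum + 1) :=
          Nat.mul_le_mul_left _ (by omega)
        have k2 : (M'.length + 1) * (b + M'.sum + 1)
            = M'.length * (b + M'.sum + 1) + (b + M'.sum + 1) := by ring
        have k3 : L'.headD 0 - M'.headD 0 ≤ M'.sum :=
          le_trans (Nat.sub_le _ _) (by rw [← hsum']; exact headD_le_sum L')
        omega
      have hrec := ih L' M' hLs.of_cons hMs.of_cons
        (fun p hp => hLp p (List.mem_cons_of_mem _ hp))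
        (fun p hp => hMp p (List.mem_cons_of_mem _ hp)) hsum' hdom' hmeas
      have hsplit : ((b :: M').map chi).prod - ((b :: L').map chi).prod
          = chi b * ((M'.map chi).prod - (L'.map chi).prod) := by
        simp only [List.map_cons, List.prod_cons]
        ring
      rw [hsplit]
      exact combo_mul (combo_chi b) hrec
    · -- strict heads case : b < a
      have hPlen : 2 ≤ (b::M').length ∧
          (((b::M')).take (b::M').length).sum = (((a::L')).take (b::M').length).sum := by
        constructor
        · cases M' with
          | nil =>
            exfalso
            have h1 : (a::L').sum = (b :: ([] : List ℕ)).sum := hsum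
            simp [List.sum_cons] at h1
            omega
          | cons c M'' => simp
        · have h1 := hdom (b::M').length
          have h2 : (((a::L')).take (b::M').length).sum ≤ (a::L').sum := sum_take_le _ _
          rw [List.take_length] at h1 ⊢
          omega
      have hex : ∃ j, 2 ≤ j ∧ ((b::M').take j).sum = ((a::L').take j).sum := ⟨_, hPlen⟩
      obtain ⟨s0, hsP, hsmin⟩ : ∃ s, (2 ≤ s ∧ ((b::M').take s).sum = ((a::L').take s).sum)
          ∧ ∀ j < s, ¬(2 ≤ j ∧ ((b::M').take j).sum = ((a::L').take j).sum) :=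
        ⟨Nat.find hex, Nat.find_spec hex, fun j hj => Nat.find_min hex hj⟩
      have hsle : s0 ≤ (b::M').length := by
        by_contra hc
        exact hsmin _ (by omega) hPlen
      have hstrict : ∀ j, 1 ≤ j → j < s0 → ((b::M').take j).sum < ((a::L').take j).sum := by
        intro j hj1 hjs
        rcases eq_or_lt_of_le hj1 with h1 | h2
        · rw [← h1]
          simpa using hlt
        · have hne := hsmin j hjs
          push_neg at hne
          have hd := hdom j
          have := hne (by omega)
          omega
      obtain ⟨s2, rfl⟩ : ∃ s2, s0 = s2 + 2 := ⟨s0 - 2, by omega⟩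
      have hq : s2 < M'.length := by
        simp only [List.length_cons] at hsle
        omega
      obtain ⟨A, e, B, hAB, hlenA⟩ : ∃ A e B, M' = A ++ e :: B ∧ A.length = s2 := by
        refine ⟨M'.take s2, M'[s2], M'.drop (s2+1), ?_, by rw [List.length_take]; omega⟩
        conv_lhs => rw [← List.take_append_drop s2 M']
        rw [List.drop_eq_getElem_cons hq]
      subst hAB
      have hMs'' : (A ++ e :: B).Pairwise (· ≥ ·) := hMs.of_cons
      rw [List.pairwise_append] at hMs''
      obtain ⟨hA, heB, hAeB⟩ := hMs''
      have hBs : B.Pairwise (· ≥ ·) := List.Pairwise.of_cons heB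
      have heBle : ∀ x ∈ B, x ≤ e := fun x hx => (List.pairwise_cons.mp heB).1 x hx
      have hbM : ∀ x ∈ A ++ e :: B, x ≤ b := fun x hx => (List.pairwise_cons.mp hMs).1 x hx
      have hbe : e ≤ b := hbM e (by simp)
      have hepos : 0 < e := hMp e (by simp)
      have hS1 : ((b :: (A ++ e :: B)).take (s2+1)).sum = b + A.sum := by
        rw [sum_take_cons_append b A e B (by omega), if_pos (by omega)]
        have : s2 + 1 - 1 = A.length := by omega
        rw [this, List.take_length]
      have hS2 : ((b :: (A ++ e :: B)).take (s2+2)).sum = b + A.sum + e := by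
        rw [sum_take_cons_append b A e B (by omega), if_neg (by omega), hlenA]
        simp
      have hT2 := hsP.2
      have hT1 := hstrict (s2+1) (by omega) (by omega)
      have hconc : ((a::L').take (s2+3)).sum + ((a::L').take (s2+1)).sum
          ≤ 2 * ((a::L').take (s2+2)).sum := by
        have h := sum_take_concave hLs (s2+1)
        rw [show s2+1+2 = s2+3 by omega, show s2+1+1 = s2+2 by omega] at h
        exact h
      have hdom3 := hdom (s2+3)
      rw [hS1] at hT1
      rw [hS2] at hT2
      have hBe1 : ∀ x ∈ B, x + 1 ≤ e := by
        cases B with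
        | nil => intro x hx; simp at hx
        | cons e' B'' =>
          have hS3 : ((b :: (A ++ e :: e'::B'')).take (s2+3)).sum = b + A.sum + e + e' := by
            rw [sum_take_cons_append b A e (e'::B'') (by omega), if_neg (by omega), hlenA]
            simp
          rw [hS3] at hdom3
          have he' : e' + 1 ≤ e := by omega
          intro x hx
          rcases List.mem_cons.mp hx with rfl | hx'
          · exact he'
          · have : x ≤ e' := (List.pairwise_cons.mp (List.Pairwise.of_cons heB)).1 x hx'
            omega
      rcases Nat.lt_or_ge e 2 with he1 | he2
      · -- e = 1 : then B = [] and nu = (b+1) :: A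
        have he : e = 1 := by omega
        have hB : B = [] := by
          cases B with
          | nil => rfl
          | cons e' B'' =>
            exfalso
            have := hBe1 e' (by simp)
            have he'pos : 0 < e' := hMp e' (by simp)
            omega
        subst hB
        subst he
        have hnus : ((b+1) :: A).Pairwise (· ≥ ·) := by
          rw [List.pairwise_cons]
          exact ⟨fun x hx => le_trans (hbM x (by simp [hx])) (by omega), hA⟩
        have hnup : ∀ p ∈ (b+1) :: A, 0 < p := by
          intro p hp
          rcases List.mem_cons.mp hp with rfl | h
          · omega
          · exact hMp p (by simp [h])
        have hnusum : ((b+1) :: A).sum = (b :: (A ++ [1])).sum := by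
          simp [List.sum_cons, List.sum_append]
          omega
        have hnudom : ∀ j, (((b+1) :: A).take j).sum ≤ ((a::L').take j).sum := by
          intro j
          rcases Nat.eq_zero_or_pos j with rfl | hj
          · simp
          rcases le_or_gt j (s2+1) with hle | hgt
          · have hMj : ((b :: (A ++ (1:ℕ) :: [])).take j).sum = b + (A.take (j-1)).sum := by
              rw [sum_take_cons_append b A 1 [] hj, if_pos (by omega)]
            have hNj : (((b+1) :: A).take j).sum = (b+1) + (A.take (j-1)).sum := by
              obtain ⟨i, rfl⟩ : ∃ i, j = i+1 := ⟨j-1, by omega⟩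
              rw [List.take_succ_cons, List.sum_cons]
              simp
            have hstr := hstrict j hj (by omega)
            rw [hMj] at hstr
            omega
          · have hNj : (((b+1) :: A).take j).sum = b + 1 + A.sum := by
              rw [List.take_of_length_le (by simp only [List.length_cons, hlenA]; omega)]
              simp
            have hMj : ((b :: (A ++ [1])).take j).sum = b + A.sum + 1 := by
              rw [List.take_of_length_le
                (by simp only [List.length_cons, List.length_append, hlenA, List.length_nil]; omega)]
              simp [List.sum_append]
              omega
            have hd := hdom j
            rw [hMj] at hd
            omega
        have hsumM : (b :: (A ++ [1])).sum = b + A.sum + 1 := by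
          simp [List.sum_append]
          omega
        have hmeas : ((b+1) :: A).length * (((b+1) :: A).sum + 1)
            + ((a::L').headD 0 - ((b+1) :: A).headD 0) ≤ n := by
          have hlenM : (b :: (A ++ [1])).length = s2 + 2 := by simp [hlenA]
          have hlennu : ((b+1) :: A).length = s2 + 1 := by simp [hlenA]
          have hsumnu : ((b+1) :: A).sum = b + A.sum + 1 := by
            rw [hnusum, hsumM]
          rw [hlenM, hsumM] at hm
          rw [hlennu, hsumnu]
          simp only [List.headD_cons] at hm ⊢
          have haS : a ≤ b + A.sum + 1 := by
            have h1 : a ≤ (a::L').sum := by simp [List.sum_cons]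
            rw [hsum, hsumM] at h1
            exact h1
          have k : (s2+2)*((b+A.sum+1)+1) = (s2+1)*((b+A.sum+1)+1) + ((b+A.sum+1)+1) := by
            ring
          omega
        have hrec := ih (a::L') ((b+1)::A) hLs hnus hLp hnup
          (hsum.trans hnusum.symm) hnudom hmeas
        have hcg : chi b * chi 1 = chi (b+1) + chi (b-1) := by
          have h := cg_step b 1 hb (le_refl 1)
          norm_num [chi_zero] at h
          exact h
        have hmove : ((b :: (A ++ [1])).map chi).prod - (((b+1) :: A).map chi).prod
            = chi (b-1) * (A.map chi).prod := by
          simp only [List.map_cons, List.map_append, List.prod_cons, List.prod_append,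
            List.map_nil, List.prod_nil]
          linear_combination (A.map chi).prod * hcg
        have hfinal : ((b :: (A ++ [1])).map chi).prod - ((a::L').map chi).prod
            = (((b :: (A ++ [1])).map chi).prod - (((b+1) :: A).map chi).prod)
              + ((((b+1) :: A).map chi).prod - ((a::L').map chi).prod) := by ring
        rw [hfinal, hmove]
        exact combo_add (combo_mul (combo_chi _) (combo_listprod A)) hrec
      · -- e ≥ 2 : nu = (b+1) :: A ++ (e-1) :: B
        have hnus : ((b+1) :: (A ++ (e-1) :: B)).Pairwise (· ≥ ·) := by
          rw [List.pairwise_cons]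
          constructor
          · intro x hx
            rcases List.mem_append.mp hx with h | h
            · exact le_trans (hbM x (by simp [h])) (by omega)
            · rcases List.mem_cons.mp h with rfl | h'
              · omega
              · exact le_trans (hbM x (by simp [h'])) (by omega)
          · rw [List.pairwise_append]
            refine ⟨hA, ?_, ?_⟩
            · rw [List.pairwise_cons]
              exact ⟨fun x hx => by have := hBe1 x hx; omega, hBs⟩
            · intro x hx y hy
              have hxe : e ≤ x := hAeB x hx e (by simp)
              rcases List.mem_cons.mp hy with rfl | h'
              · omega
              · have := hAeB x hx y (by simp [h'])
                exact this
        have hnup : ∀ p ∈ (b+1) :: (A ++ (e-1) :: B), 0 < p := by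
          intro p hp
          rcases List.mem_cons.mp hp with rfl | h
          · omega
          rcases List.mem_append.mp h with h' | h'
          · exact hMp p (by simp [h'])
          rcases List.mem_cons.mp h' with rfl | h''
          · omega
          · exact hMp p (by simp [h''])
        have hnusum : ((b+1) :: (A ++ (e-1) :: B)).sum = (b :: (A ++ e :: B)).sum := by
          simp only [List.sum_cons, List.sum_append]
          omega
        have hnudom : ∀ j, (((b+1) :: (A ++ (e-1) :: B)).take j).sum
            ≤ ((a::L').take j).sum := by
          intro j
          rcases Nat.eq_zero_or_pos j with rfl | hj
          · simp
          rcases le_or_gt j (s2+1) with hle | hgt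
          · have hMj : ((b :: (A ++ e :: B)).take j).sum = b + (A.take (j-1)).sum := by
              rw [sum_take_cons_append b A e B hj, if_pos (by omega)]
            have hNj : (((b+1) :: (A ++ (e-1) :: B)).take j).sum
                = (b+1) + (A.take (j-1)).sum := by
              rw [sum_take_cons_append (b+1) A (e-1) B hj, if_pos (by omega)]
            have hstr := hstrict j hj (by omega)
            rw [hMj] at hstr
            omega
          · have hMj : ((b :: (A ++ e :: B)).take j).sum
                = b + A.sum + e + (B.take (j - A.length - 2)).sum := by
              rw [sum_take_cons_append b A e B (by omega), if_neg (by omega)]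
            have hNj : (((b+1) :: (A ++ (e-1) :: B)).take j).sum
                = (b+1) + A.sum + (e-1) + (B.take (j - A.length - 2)).sum := by
              rw [sum_take_cons_append (b+1) A (e-1) B (by omega), if_neg (by omega)]
            have hd := hdom j
            rw [hMj] at hd
            omega
        have hmeas : ((b+1) :: (A ++ (e-1) :: B)).length
            * (((b+1) :: (A ++ (e-1) :: B)).sum + 1)
            + ((a::L').headD 0 - ((b+1) :: (A ++ (e-1) :: B)).headD 0) ≤ n := by
          have hlen : ((b+1) :: (A ++ (e-1) :: B)).length = (b :: (A ++ e :: B)).length := by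
            simp
          rw [hlen, hnusum]
          simp only [List.headD_cons] at hm ⊢
          omega
        have hrec := ih (a::L') ((b+1) :: (A ++ (e-1) :: B)) hLs hnus hLp hnup
          (hsum.trans hnusum.symm) hnudom hmeas
        have hcg := cg_step b e hbe hepos
        have hmove : ((b :: (A ++ e :: B)).map chi).prod
            - (((b+1) :: (A ++ (e-1) :: B)).map chi).prod
            = chi (b-e) * ((A.map chi).prod * (B.map chi).prod) := by
          simp only [List.map_cons, List.map_append, List.prod_cons, List.prod_append]
          linear_combination ((A.map chi).prod * (B.map chi).prod) * hcg
        have hfinal : ((b :: (A ++ e :: B)).map chi).prod - ((a::L').map chi).prod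
            = (((b :: (A ++ e :: B)).map chi).prod
                - (((b+1) :: (A ++ (e-1) :: B)).map chi).prod)
              + ((((b+1) :: (A ++ (e-1) :: B)).map chi).prod - ((a::L').map chi).prod) := by
          ring
        rw [hfinal, hmove]
        exact combo_add (combo_mul (combo_chi _)
          (combo_mul (combo_listprod A) (combo_listprod B))) hrec

lemma combo_to_sum {f : LaurentPolynomial ℤ} (hf : IsChiCombo f) :
    ∃ (N : ℕ) (c : ℕ → ℕ), f = ∑ τ ∈ Finset.range N, (c τ : ℤ) • chi τ := by
  obtain ⟨c, rfl⟩ := hf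
  refine ⟨(c.support.sup id) + 1, c, ?_⟩
  rw [Finsupp.sum]
  apply Finset.sum_subset
  · intro x hx
    simp only [Finset.mem_range]
    exact Nat.lt_succ_of_le (Finset.le_sup (f := id) hx)
  · intro x _ hx
    rw [Finsupp.notMem_support_iff.mp hx]
    simp

/-- The sl₂ instance of the main theorem: if `λ ⪯ μ` are partitions of `m` in the
reverse dominance order, then `χ_{n₁}···χ_{n_{k₂}} − χ_{m₁}···χ_{m_{k₁}}` is a
nonnegative integer combination of the characters `χ_τ`; equivalently, for every
irreducible `V(τ)` the multiplicity of `V(τ)` in `V(m₁)⊗⋯⊗V(m_{k₁})` is at most its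
multiplicity in `V(n₁)⊗⋯⊗V(n_{k₂})`. -/
theorem sl2_main_theorem (m : ℕ) (lam mu : PartitionL m) (h : rdom lam mu) :
    ∃ (N : ℕ) (c : ℕ → ℕ),
      (mu.parts.map chi).prod - (lam.parts.map chi).prod
        = ∑ τ ∈ Finset.range N, (c τ : ℤ) • chi τ := by
  apply combo_to_sum
  have h5 : lam.parts.sum = mu.parts.sum := lam.sum_eq.trans mu.sum_eq.symm
  have hall : ∀ j, (mu.parts.take j).sum ≤ (lam.parts.take j).sum := by
    intro j
    rcases le_or_gt j (min lam.parts.length mu.parts.length) with hle | hgt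
    · exact h j hle
    · rcases le_or_gt lam.parts.length mu.parts.length with hLM | hML
      · have h1 : (lam.parts.take j).sum = lam.parts.sum := by
          rw [List.take_of_length_le (by omega)]
        have h2 : (mu.parts.take j).sum ≤ mu.parts.sum := sum_take_le _ _
        omega
      · have hlen := h mu.parts.length (by omega)
        rw [List.take_length] at hlen
        have h3 : (lam.parts.take mu.parts.length).sum ≤ (lam.parts.take j).sum :=
          sum_take_mono _ (by omega)
        have h4 : (mu.parts.take j).sum ≤ mu.parts.sum := sum_take_le _ _
        omega
  exact key (mu.parts.length * (mu.parts.sum + 1)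
      + (lam.parts.headD 0 - mu.parts.headD 0)) lam.parts mu.parts
    lam.sorted mu.sorted lam.pos mu.pos h5 hall le_rfl
end
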